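/- Discrete entropy / Fisher information estimate (single time step): let (c, μ) be a solution of the one-step scheme with c_{i,K} > 0 for every K ∈ V and i ∈ {1,2}, and set L_K := (1/m_K) Σ_{L : {K,L} ∈ E} τ_{KL} (c_{1,K} − c_{1,L}) for K ∈ V. Then Σ_{i=1,2} η_i Σ_{K ∈ V} m_K ( H(c_{i,K}) − H(c⁰_{i,K}) ) + Δt (α/2) Σ_{K ∈ V} m_K L_K² + Δt Σ_{i=1,2} η_i θ_i Σ_{{K,L} ∈ E} τ_{KL} (c_{i,K} − c_{i,L})(log c_{i,K} − log c_{i,L}) ≤ Δt (κ²/(2α)) Σ_{K ∈ V} m_K + Δt ( Σ_{{K,L} ∈ E} τ_{KL} (c_{1,K} − c_{1,L})² )^{1/2} · Σ_{i=1,2} ( Σ_{{K,L} ∈ E} τ_{KL} (Ψ_{i,K} − Ψ_{i,L})² )^{1/2}. -/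

import Mathlib

open Finset

/-- Logarithmic-mean edge value: `lm a b = a` if `a = b ≥ 0`, `0` if `min a b ≤ 0`,
and `(a - b)/(log a - log b)` otherwise. -/
noncomputable def lm (a b : ℝ) : ℝ :=
  if a = b ∧ 0 ≤ a then a
  else if min a b ≤ 0 then 0
  else (a - b) / (Real.log a - Real.log b)

/-- Entropy function `H(c) = c log c - c + 1` (note `H 0 = 1` since `Real.log 0 = 0`). -/
noncomputable def ent (c : ℝ) : ℝ := c * Real.log c - c + 1

/-- Sum of `f L` over the neighbours `L` of `K`, i.e. over the `L` with `(K, L) ∈ E`. -/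
noncomputable def nbrSum {V : Type*} [Fintype V] [DecidableEq V]
    (E : Finset (V × V)) (K : V) (f : V → ℝ) : ℝ :=
  ∑ L ∈ Finset.univ.filter (fun L => (K, L) ∈ E), f L

/-- Sum of a symmetric quantity `f K L` over the unordered edges `{K, L}`, where the
edge set `E` is recorded as a symmetric finset of ordered pairs: each unordered edge
appears as both `(K, L)` and `(L, K)`, whence the division by `2`. -/
noncomputable def edgeSum {V : Type*} (E : Finset (V × V)) (f : V → V → ℝ) : ℝ :=
  (∑ p ∈ E, f p.1 p.2) / 2

/-- The one-step finite-volume scheme: equations (i) for both phases, (ii), (iii), (iv). -/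
def OneStepScheme {V : Type*} [Fintype V] [DecidableEq V]
    (E : Finset (V × V)) (m : V → ℝ) (τ : V → V → ℝ)
    (Δt α κ η₁ η₂ θ₁ θ₂ : ℝ) (Ψ₁ Ψ₂ : V → ℝ)
    (c₁₀ c₂₀ c₁ c₂ μ₁ μ₂ : V → ℝ) : Prop :=
  (∀ K : V,
    m K * (c₁ K - c₁₀ K) / Δt
      + nbrSum E K (fun L =>
          τ K L * (lm (c₁ K) (c₁ L) / η₁ * (μ₁ K + Ψ₁ K - μ₁ L - Ψ₁ L)
            + θ₁ * (c₁ K - c₁ L))) = 0) ∧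
  (∀ K : V,
    m K * (c₂ K - c₂₀ K) / Δt
      + nbrSum E K (fun L =>
          τ K L * (lm (c₂ K) (c₂ L) / η₂ * (μ₂ K + Ψ₂ K - μ₂ L - Ψ₂ L)
            + θ₂ * (c₂ K - c₂ L))) = 0) ∧
  (∀ K : V,
    μ₁ K - μ₂ K
      = α / m K * nbrSum E K (fun L => τ K L * (c₁ K - c₁ L))
        + κ * (1 - 2 * c₁₀ K)) ∧
  (∀ K : V, c₁ K + c₂ K = 1) ∧
  (∑ K : V, m K * (c₁ K * μ₁ K + c₂ K * μ₂ K) = 0)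

/-- The discrete energy `𝔈(c)`. -/
noncomputable def discreteEnergy {V : Type*} [Fintype V]
    (E : Finset (V × V)) (m : V → ℝ) (τ : V → V → ℝ)
    (α κ η₁ η₂ θ₁ θ₂ : ℝ) (Ψ₁ Ψ₂ : V → ℝ) (c₁ c₂ : V → ℝ) : ℝ :=
  α / 2 * edgeSum E (fun K L => τ K L * (c₁ K - c₁ L) ^ 2)
    + ∑ K : V, m K * (κ * c₁ K * c₂ K
        + (c₁ K * Ψ₁ K + θ₁ * η₁ * ent (c₁ K))
        + (c₂ K * Ψ₂ K + θ₂ * η₂ * ent (c₂ K)))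

/-- The discrete dissipation `𝔇(c, μ)`. -/
noncomputable def discreteDissipation {V : Type*}
    (E : Finset (V × V)) (τ : V → V → ℝ)
    (η₁ η₂ θ₁ θ₂ : ℝ) (Ψ₁ Ψ₂ : V → ℝ) (c₁ c₂ μ₁ μ₂ : V → ℝ) : ℝ :=
  edgeSum E (fun K L => τ K L * (lm (c₁ K) (c₁ L) / η₁)
      * (μ₁ K + Ψ₁ K + θ₁ * η₁ * Real.log (c₁ K)
          - μ₁ L - Ψ₁ L - θ₁ * η₁ * Real.log (c₁ L)) ^ 2)
  + edgeSum E (fun K L => τ K L * (lm (c₂ K) (c₂ L) / η₂)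
      * (μ₂ K + Ψ₂ K + θ₂ * η₂ * Real.log (c₂ K)
          - μ₂ L - Ψ₂ L - θ₂ * η₂ * Real.log (c₂ L)) ^ 2)

/-!
Testing the scheme for phase `i` against `ηᵢ log cᵢ`: convexity of `H` bounds the entropy
change by `∑ log c_K · m_K (c_K - c⁰_K)`, and summation by parts turns the fluxes into edge
sums, where `lm a b · (log a - log b) = a - b` produces the Fisher-information term. Adding the
two phases, `c₂ = 1 - c₁` collapses the chemical-potential terms into
`∑ (μ₁ - μ₂)_K · m_K L_K`, which by (ii) is `α ∑ m_K L_K²` plus a `κ`-term absorbed by Young's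
inequality (as `|1 - 2 c⁰| ≤ 1`); the potential terms are bounded by Cauchy–Schwarz on edges.
-/

lemma ent_sub_ent_le {c c₀ : ℝ} (hc : 0 < c) (hc₀ : 0 ≤ c₀) :
    ent c - ent c₀ ≤ Real.log c * (c - c₀) := by
  have key : c₀ * (Real.log c - Real.log c₀) ≤ c - c₀ := by
    rcases hc₀.eq_or_lt with rfl | hc₀
    · simpa using hc.le
    · calc c₀ * (Real.log c - Real.log c₀) = c₀ * Real.log (c / c₀) := by
            rw [Real.log_div hc.ne' hc₀.ne']
        _ ≤ c₀ * (c / c₀ - 1) := by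
            gcongr; exact Real.log_le_sub_one_of_pos (by positivity)
        _ = c - c₀ := by field_simp
  unfold ent
  linarith

lemma lm_comm (a b : ℝ) : lm a b = lm b a := by
  unfold lm
  by_cases hab : a = b
  · simp [hab]
  · simp only [hab, Ne.symm hab, false_and, if_false, min_comm b a]
    rw [← neg_sub a b, ← neg_sub (Real.log a), neg_div_neg_eq]

lemma lm_mul_log_sub_log {a b : ℝ} (ha : 0 < a) (hb : 0 < b) :
    lm a b * (Real.log a - Real.log b) = a - b := by
  unfold lm
  by_cases hab : a = b
  · simp [hab]
  · have hlog : Real.log a - Real.log b ≠ 0 :=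
      sub_ne_zero.mpr fun h => hab (Real.log_injOn_pos ha hb h)
    rw [if_neg (fun h => hab h.1), if_neg (not_le.mpr (lt_min ha hb)), div_mul_cancel₀ _ hlog]

section Edges

variable {V : Type*} (E : Finset (V × V))

lemma edgeSum_add (f g : V → V → ℝ) :
    edgeSum E f + edgeSum E g = edgeSum E (fun K L => f K L + g K L) := by
  simp only [edgeSum, sum_add_distrib, add_div]

lemma mul_edgeSum (a : ℝ) (f : V → V → ℝ) :
    a * edgeSum E f = edgeSum E (fun K L => a * f K L) := by
  simp only [edgeSum, ← mul_sum, mul_div_assoc]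

lemma edgeSum_nonneg {f : V → V → ℝ} (hf : ∀ p ∈ E, 0 ≤ f p.1 p.2) :
    0 ≤ edgeSum E f :=
  div_nonneg (sum_nonneg hf) zero_le_two

lemma abs_edgeSum_mul_le_sqrt_mul_sqrt {w : V → V → ℝ} (hw : ∀ p ∈ E, 0 ≤ w p.1 p.2)
    (x y : V → V → ℝ) :
    |edgeSum E (fun K L => w K L * x K L * y K L)|
      ≤ √(edgeSum E (fun K L => w K L * x K L ^ 2))
        * √(edgeSum E (fun K L => w K L * y K L ^ 2)) := by
  have hx : ∀ p ∈ E, 0 ≤ w p.1 p.2 * x p.1 p.2 ^ 2 := fun p hp => by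
    have := hw p hp; positivity
  have hy : ∀ p ∈ E, 0 ≤ w p.1 p.2 * y p.1 p.2 ^ 2 := fun p hp => by
    have := hw p hp; positivity
  have cs := sum_sq_le_sum_mul_sum_of_sq_le_mul E
    (r := fun p => w p.1 p.2 * x p.1 p.2 * y p.1 p.2) hx hy fun p _ => le_of_eq (by ring)
  rw [← Real.sqrt_mul (edgeSum_nonneg E hx)]
  refine Real.abs_le_sqrt ?_
  simp only [edgeSum]
  linarith

lemma sum_nbrSum [Fintype V] [DecidableEq V] (F : V → V → ℝ) :
    ∑ K, nbrSum E K (F K) = ∑ p ∈ E, F p.1 p.2 := by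
  simp only [nbrSum, sum_filter]
  rw [← sum_product', ← sum_filter]
  congr 1
  ext p
  simp

variable (hEsym : ∀ K L : V, (K, L) ∈ E ↔ (L, K) ∈ E)
include hEsym

lemma sum_swap_of_symm (f : V × V → ℝ) : ∑ p ∈ E, f p.swap = ∑ p ∈ E, f p :=
  sum_nbij' Prod.swap Prod.swap (fun p hp => (hEsym p.1 p.2).mp hp)
    (fun p hp => (hEsym p.1 p.2).mp hp) (fun _ _ => rfl) (fun _ _ => rfl) (fun _ _ => rfl)

/-- Discrete summation by parts against an antisymmetric flux. -/
lemma sum_mul_nbrSum_eq_edgeSum [Fintype V] [DecidableEq V] (g : V → ℝ) (F : V → V → ℝ)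
    (hF : ∀ K L, (K, L) ∈ E → F K L = -F L K) :
    ∑ K, g K * nbrSum E K (F K) = edgeSum E (fun K L => (g K - g L) * F K L) := by
  have hswap : ∑ p ∈ E, g p.2 * F p.1 p.2 = -∑ p ∈ E, g p.1 * F p.1 p.2 := by
    rw [← sum_swap_of_symm E hEsym, ← sum_neg_distrib]
    exact sum_congr rfl fun p hp => by
      rw [Prod.fst_swap, Prod.snd_swap, hF p.2 p.1 ((hEsym _ _).mp hp), mul_neg]
  calc ∑ K, g K * nbrSum E K (F K) = ∑ p ∈ E, g p.1 * F p.1 p.2 := by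
        rw [← sum_nbrSum E (fun K L => g K * F K L)]; simp only [nbrSum, mul_sum]
    _ = _ := by simp only [edgeSum, sub_mul, sum_sub_distrib, hswap]; ring

end Edges

lemma half_mul_sq_sub_le_of_sq_le_one {α κ m n u : ℝ} (hα : 0 < α) (hm : 0 < m)
    (hu : u ^ 2 ≤ 1) :
    α / 2 * (m * (1 / m * n) ^ 2) - (α / m * n + κ * u) * n ≤ κ ^ 2 / (2 * α) * m := by
  obtain ⟨ℓ, rfl⟩ : ∃ ℓ, n = m * ℓ := ⟨n / m, by field_simp⟩
  rw [show 1 / m * (m * ℓ) = ℓ by field_simp, show α / m * (m * ℓ) = α * ℓ by field_simp,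
    show κ ^ 2 / (2 * α) * m = κ ^ 2 * m / (2 * α) by ring, le_div_iff₀ (by positivity)]
  -- the gap is `m ((α ℓ + κ u)² + κ² (1 - u²))`
  nlinarith [mul_nonneg hm.le (sq_nonneg (α * ℓ + κ * u)),
    mul_nonneg (mul_nonneg hm.le (sq_nonneg κ)) (sub_nonneg.2 hu)]

lemma half_sum_sq_sub_sum_le {V : Type*} [Fintype V] {m n g c₀ : V → ℝ} {α κ : ℝ}
    (hα : 0 < α) (hm : ∀ K, 0 < m K) (hc₀ : ∀ K, c₀ K ∈ Set.Icc (0 : ℝ) 1)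
    (hg : ∀ K, g K = α / m K * n K + κ * (1 - 2 * c₀ K)) :
    α / 2 * ∑ K, m K * (1 / m K * n K) ^ 2 - ∑ K, g K * n K
      ≤ κ ^ 2 / (2 * α) * ∑ K, m K := by
  rw [mul_sum, mul_sum, ← sum_sub_distrib]
  refine sum_le_sum fun K _ => ?_
  have hu : (1 - 2 * c₀ K) ^ 2 ≤ 1 := by nlinarith [(hc₀ K).1, (hc₀ K).2]
  rw [hg K]
  exact half_mul_sq_sub_le_of_sq_le_one hα (hm K) hu

lemma entropy_dissipation_le {V : Type*} [Fintype V] [DecidableEq V]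
    (E : Finset (V × V)) (m : V → ℝ) (τ : V → V → ℝ) (Δt η θ : ℝ)
    (Ψ c₀ c μ : V → ℝ) (hEsym : ∀ K L : V, (K, L) ∈ E ↔ (L, K) ∈ E) (hm : ∀ K, 0 < m K)
    (hτsym : ∀ K L, τ K L = τ L K) (hΔt : 0 < Δt) (hη : 0 < η)
    (hc₀ : ∀ K, 0 ≤ c₀ K) (hc : ∀ K, 0 < c K)
    (hscheme : ∀ K, m K * (c K - c₀ K) / Δt
      + nbrSum E K (fun L => τ K L * (lm (c K) (c L) / η * (μ K + Ψ K - μ L - Ψ L)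
          + θ * (c K - c L))) = 0) :
    η * ∑ K, m K * (ent (c K) - ent (c₀ K))
        + Δt * (η * θ * edgeSum E (fun K L =>
            τ K L * (c K - c L) * (Real.log (c K) - Real.log (c L))))
      ≤ -Δt * (edgeSum E (fun K L => τ K L * (c K - c L) * (μ K - μ L))
        + edgeSum E (fun K L => τ K L * (c K - c L) * (Ψ K - Ψ L))) := by
  set F : V → V → ℝ := fun K L =>
    τ K L * (lm (c K) (c L) / η * (μ K + Ψ K - μ L - Ψ L) + θ * (c K - c L))
  have hmass : ∀ K, m K * (c K - c₀ K) = -Δt * nbrSum E K (F K) := fun K => by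
    linear_combination (div_eq_iff hΔt.ne').mp (eq_neg_of_add_eq_zero_left (hscheme K))
  have hF_anti : ∀ K L, (K, L) ∈ E → F K L = -F L K := fun K L _ => by
    simp only [F, hτsym K L, lm_comm (c K)]
    ring
  have hent : ∑ K, m K * (ent (c K) - ent (c₀ K))
      ≤ ∑ K, Real.log (c K) * (m K * (c K - c₀ K)) := sum_le_sum fun K _ => by
    nlinarith [mul_le_mul_of_nonneg_left (ent_sub_ent_le (hc K) (hc₀ K)) (hm K).le]
  have hparts : ∑ K, Real.log (c K) * (m K * (c K - c₀ K))
      = -Δt * edgeSum E (fun K L => (Real.log (c K) - Real.log (c L)) * F K L) := by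
    simp only [hmass, mul_left_comm _ (-Δt), ← mul_sum]
    rw [sum_mul_nbrSum_eq_edgeSum E hEsym _ F hF_anti]
  have hflux : η * edgeSum E (fun K L => (Real.log (c K) - Real.log (c L)) * F K L)
      = edgeSum E (fun K L => τ K L * (c K - c L) * (μ K - μ L))
        + edgeSum E (fun K L => τ K L * (c K - c L) * (Ψ K - Ψ L))
        + η * θ * edgeSum E (fun K L =>
            τ K L * (c K - c L) * (Real.log (c K) - Real.log (c L))) := by
    rw [mul_edgeSum, mul_edgeSum, edgeSum_add, edgeSum_add]
    congr 1
    funext K L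
    have hlm := lm_mul_log_sub_log (hc K) (hc L)
    simp only [F]
    field_simp
    linear_combination (τ K L * (μ K + Ψ K - μ L - Ψ L)) * hlm
  linear_combination mul_le_mul_of_nonneg_left hent hη.le + η * hparts - Δt * hflux

theorem entropy_fisher_estimate_one_step_general
    {V : Type*} [Fintype V] [DecidableEq V]
    (E : Finset (V × V)) (m : V → ℝ) (τ : V → V → ℝ)
    (Δt α κ η₁ η₂ θ₁ θ₂ : ℝ) (Ψ₁ Ψ₂ : V → ℝ)
    (c₁₀ c₂₀ c₁ c₂ μ₁ μ₂ : V → ℝ)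
    (hEsym : ∀ K L : V, (K, L) ∈ E ↔ (L, K) ∈ E)
    (hm : ∀ K, 0 < m K)
    (hτpos : ∀ K L, (K, L) ∈ E → 0 < τ K L)
    (hτsym : ∀ K L, τ K L = τ L K)
    (hΔt : 0 < Δt) (hα : 0 < α)
    (hη₁ : 0 < η₁) (hη₂ : 0 < η₂)
    (hc₁₀ : ∀ K, c₁₀ K ∈ Set.Icc (0:ℝ) 1)
    (hc₂₀ : ∀ K, c₂₀ K ∈ Set.Icc (0:ℝ) 1)
    (hsol : OneStepScheme E m τ Δt α κ η₁ η₂ θ₁ θ₂ Ψ₁ Ψ₂ c₁₀ c₂₀ c₁ c₂ μ₁ μ₂)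
    (hpos : ∀ K : V, 0 < c₁ K ∧ 0 < c₂ K) :
    η₁ * (∑ K : V, m K * (ent (c₁ K) - ent (c₁₀ K)))
      + η₂ * (∑ K : V, m K * (ent (c₂ K) - ent (c₂₀ K)))
      + Δt * (α / 2) * ∑ K : V, m K
          * ((1 / m K) * nbrSum E K (fun L => τ K L * (c₁ K - c₁ L))) ^ 2
      + Δt * (η₁ * θ₁ * edgeSum E (fun K L =>
            τ K L * (c₁ K - c₁ L) * (Real.log (c₁ K) - Real.log (c₁ L)))
          + η₂ * θ₂ * edgeSum E (fun K L =>
            τ K L * (c₂ K - c₂ L) * (Real.log (c₂ K) - Real.log (c₂ L))))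
    ≤ Δt * (κ ^ 2 / (2 * α)) * (∑ K : V, m K)
      + Δt * Real.sqrt (edgeSum E (fun K L => τ K L * (c₁ K - c₁ L) ^ 2))
          * (Real.sqrt (edgeSum E (fun K L => τ K L * (Ψ₁ K - Ψ₁ L) ^ 2))
            + Real.sqrt (edgeSum E (fun K L => τ K L * (Ψ₂ K - Ψ₂ L) ^ 2))) := by
  obtain ⟨hs₁, hs₂, hgap, hsum, -⟩ := hsol
  have hdc : ∀ K L, c₂ K - c₂ L = -(c₁ K - c₁ L) := fun K L => by linarith [hsum K, hsum L]
  have hτ : ∀ p ∈ E, 0 ≤ τ p.1 p.2 := fun p hp => (hτpos _ _ hp).le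
  have P₁ := entropy_dissipation_le E m τ Δt η₁ θ₁ Ψ₁ c₁₀ c₁ μ₁ hEsym hm hτsym hΔt hη₁
    (fun K => (hc₁₀ K).1) (fun K => (hpos K).1) hs₁
  have P₂ := entropy_dissipation_le E m τ Δt η₂ θ₂ Ψ₂ c₂₀ c₂ μ₂ hEsym hm hτsym hΔt hη₂
    (fun K => (hc₂₀ K).1) (fun K => (hpos K).2) hs₂
  have hgap_sum : edgeSum E (fun K L => τ K L * (c₁ K - c₁ L) * (μ₁ K - μ₁ L))
      + edgeSum E (fun K L => τ K L * (c₂ K - c₂ L) * (μ₂ K - μ₂ L))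
      = ∑ K, (μ₁ K - μ₂ K) * nbrSum E K (fun L => τ K L * (c₁ K - c₁ L)) := by
    rw [sum_mul_nbrSum_eq_edgeSum E hEsym _ (fun K L => τ K L * (c₁ K - c₁ L))
      (fun K L _ => by rw [hτsym]; ring), edgeSum_add]
    congr 1
    funext K L
    rw [hdc]
    ring
  have hY := half_sum_sq_sub_sum_le hα hm hc₁₀ hgap
  have hCS₁ := (neg_le_abs _).trans (abs_edgeSum_mul_le_sqrt_mul_sqrt E hτ
    (fun K L => c₁ K - c₁ L) (fun K L => Ψ₁ K - Ψ₁ L))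
  have hCS₂ := (neg_le_abs _).trans (abs_edgeSum_mul_le_sqrt_mul_sqrt E hτ
    (fun K L => c₂ K - c₂ L) (fun K L => Ψ₂ K - Ψ₂ L))
  have hc₂sq : edgeSum E (fun K L => τ K L * (c₂ K - c₂ L) ^ 2)
      = edgeSum E (fun K L => τ K L * (c₁ K - c₁ L) ^ 2) := by
    congr 1
    funext K L
    rw [hdc, neg_sq]
  rw [hc₂sq] at hCS₂
  linear_combination P₁ + P₂ - Δt * hgap_sum
    + mul_le_mul_of_nonneg_left (add_le_add (add_le_add hY hCS₁) hCS₂) hΔt.le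

/-- Discrete entropy / Fisher information estimate (single time step). -/
theorem entropy_fisher_estimate_one_step
    {V : Type*} [Fintype V] [DecidableEq V] [Nonempty V]
    (E : Finset (V × V)) (m : V → ℝ) (τ : V → V → ℝ)
    (Δt α κ η₁ η₂ θ₁ θ₂ : ℝ) (Ψ₁ Ψ₂ : V → ℝ)
    (c₁₀ c₂₀ c₁ c₂ μ₁ μ₂ : V → ℝ)
    (hEirr : ∀ K : V, (K, K) ∉ E)
    (hEsym : ∀ K L : V, (K, L) ∈ E ↔ (L, K) ∈ E)
    (hconn : (SimpleGraph.fromRel (fun K L : V => (K, L) ∈ E)).Connected)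
    (hm : ∀ K, 0 < m K)
    (hτpos : ∀ K L, (K, L) ∈ E → 0 < τ K L)
    (hτsym : ∀ K L, τ K L = τ L K)
    (hΔt : 0 < Δt) (hα : 0 < α) (hκ : 0 < κ)
    (hη₁ : 0 < η₁) (hη₂ : 0 < η₂) (hθ₁ : 0 < θ₁) (hθ₂ : 0 < θ₂)
    (hc₁₀ : ∀ K, c₁₀ K ∈ Set.Icc (0:ℝ) 1)
    (hc₂₀ : ∀ K, c₂₀ K ∈ Set.Icc (0:ℝ) 1)
    (hc₀sum : ∀ K, c₁₀ K + c₂₀ K = 1)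
    (hsol : OneStepScheme E m τ Δt α κ η₁ η₂ θ₁ θ₂ Ψ₁ Ψ₂ c₁₀ c₂₀ c₁ c₂ μ₁ μ₂)
    (hpos : ∀ K : V, 0 < c₁ K ∧ 0 < c₂ K) :
    η₁ * (∑ K : V, m K * (ent (c₁ K) - ent (c₁₀ K)))
      + η₂ * (∑ K : V, m K * (ent (c₂ K) - ent (c₂₀ K)))
      + Δt * (α / 2) * ∑ K : V, m K
          * ((1 / m K) * nbrSum E K (fun L => τ K L * (c₁ K - c₁ L))) ^ 2
      + Δt * (η₁ * θ₁ * edgeSum E (fun K L =>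
            τ K L * (c₁ K - c₁ L) * (Real.log (c₁ K) - Real.log (c₁ L)))
          + η₂ * θ₂ * edgeSum E (fun K L =>
            τ K L * (c₂ K - c₂ L) * (Real.log (c₂ K) - Real.log (c₂ L))))
    ≤ Δt * (κ ^ 2 / (2 * α)) * (∑ K : V, m K)
      + Δt * Real.sqrt (edgeSum E (fun K L => τ K L * (c₁ K - c₁ L) ^ 2))
          * (Real.sqrt (edgeSum E (fun K L => τ K L * (Ψ₁ K - Ψ₁ L) ^ 2))
            + Real.sqrt (edgeSum E (fun K L => τ K L * (Ψ₂ K - Ψ₂ L) ^ 2))) :=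
  entropy_fisher_estimate_one_step_general E m τ Δt α κ η₁ η₂ θ₁ θ₂ Ψ₁ Ψ₂ c₁₀ c₂₀ c₁ c₂ μ₁ μ₂ hEsym
    hm hτpos hτsym hΔt hα hη₁ hη₂ hc₁₀ hc₂₀ hsol hpos
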